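/- arXiv:2005.13038 — 8 statements merged into one kernel-verified Lean document; each statement's English description precedes it below -/
import Mathlib

section
/- For the d-letter Arnoux–Rauzy substitutions α_i (where α_i fixes i and sends j ↦ ij for j ≠ i), the composition α₁ ∘ α₂ ∘ ⋯ ∘ α_d equals the d-th power of the d-bonacci substitution α̃ defined by α̃(i) = 1(i+1) for 1 ≤ i < d and α̃(d) = 1. -/
/-- Apply a substitution (given by its action on letters) to a word. -/
def subApply {d : ℕ} (σ : Fin d → List (Fin d)) (w : List (Fin d)) : List (Fin d) :=
  w.flatMap σ

/-- Composition of substitutions: `(subComp σ τ)(w) = σ(τ(w))`. -/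
def subComp {d : ℕ} (σ τ : Fin d → List (Fin d)) : Fin d → List (Fin d) :=
  fun j => subApply σ (τ j)

/-- Iterated composition (power) of a substitution. -/
def subPow {d : ℕ} (σ : Fin d → List (Fin d)) : ℕ → Fin d → List (Fin d)
  | 0 => fun j => [j]
  | n + 1 => subComp σ (subPow σ n)

/-- The Arnoux–Rauzy substitution `α_i : i ↦ i, j ↦ ij (j ≠ i)`. -/
def arnouxRauzy {d : ℕ} (i : Fin d) : Fin d → List (Fin d) :=
  fun j => if j = i then [i] else [i, j]

/-- The `d`-bonacci substitution `α̃(i) = 1(i+1)` for `i < d`, `α̃(d) = 1`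
(letters shifted to `0,…,d-1`). -/
def dBonacci (d : ℕ) (hd : 0 < d) : Fin d → List (Fin d) :=
  fun i => if h : (i : ℕ) + 1 < d then [⟨0, hd⟩, ⟨(i : ℕ) + 1, h⟩] else [⟨0, hd⟩]

/-!
Writing `ρ` for the cyclic shift `j ↦ j + 1` of the letters, the `d`-bonacci substitution is
`α₀ ∘ ρ`. Relabelling letters by `ρ` conjugates `α_i` into `α_{i+1}`, so every occurrence of `ρ`
in `(α₀ ∘ ρ)ⁿ` can be pushed to the right, giving `(α₀ ∘ ρ)ⁿ = α₀ ∘ α₁ ∘ ⋯ ∘ α_{n-1} ∘ ρⁿ`.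
For `n = d` the shift `ρᵈ` is the identity.
-/

section Substitution

variable {d : ℕ}

def relabel (π : Fin d → Fin d) : Fin d → List (Fin d) :=
  fun j => [π j]

theorem subComp_assoc (σ τ ρ : Fin d → List (Fin d)) :
    subComp (subComp σ τ) ρ = subComp σ (subComp τ ρ) := by
  funext j
  simp only [subComp, subApply, List.flatMap_assoc]
  rfl

theorem subComp_singleton_right (σ : Fin d → List (Fin d)) :
    subComp σ (fun j => [j]) = σ := by
  funext j
  simp [subComp, subApply]

theorem subComp_singleton_left (σ : Fin d → List (Fin d)) :
    subComp (fun j => [j]) σ = σ := by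
  funext j
  simp [subComp, subApply]

theorem subPow_succ' (σ : Fin d → List (Fin d)) (n : ℕ) :
    subPow σ (n + 1) = subComp (subPow σ n) σ := by
  induction n with
  | zero => simp only [subPow, subComp_singleton_left, subComp_singleton_right]
  | succ n ih =>
    conv_lhs => rw [subPow, ih, ← subComp_assoc]
    rfl

theorem foldr_subComp_append_singleton (l : List (Fin d → List (Fin d)))
    (σ : Fin d → List (Fin d)) :
    (l ++ [σ]).foldr subComp (fun j => [j]) = subComp (l.foldr subComp (fun j => [j])) σ := by
  induction l with
  | nil => simp [subComp_singleton_left, subComp_singleton_right]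
  | cons τ l ih => simp [ih, subComp_assoc]

theorem subComp_relabel_relabel (π π' : Fin d → Fin d) :
    subComp (relabel π) (relabel π') = relabel (π ∘ π') := by
  funext j
  simp [subComp, subApply, relabel]

theorem subComp_relabel_arnouxRauzy {π : Fin d → Fin d} (hπ : π.Injective) (i : Fin d) :
    subComp (relabel π) (arnouxRauzy i) = subComp (arnouxRauzy (π i)) (relabel π) := by
  funext j
  by_cases hji : j = i
  · simp [subComp, subApply, relabel, arnouxRauzy, hji]
  · simp [subComp, subApply, relabel, arnouxRauzy, hji, hπ.ne hji]

theorem subPow_arnouxRauzy_relabel {π : Fin d → Fin d} (hπ : π.Injective) (a : Fin d) (n : ℕ) :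
    subPow (subComp (arnouxRauzy a) (relabel π)) n =
      subComp ((List.ofFn fun k : Fin n => arnouxRauzy (π^[k] a)).foldr subComp (fun j => [j]))
        (relabel π^[n]) := by
  induction n with
  | zero => rfl
  | succ n ih =>
    rw [subPow_succ', ih, List.ofFn_succ', List.concat_eq_append,
      foldr_subComp_append_singleton, Function.iterate_succ, ← subComp_relabel_relabel]
    simp only [Fin.val_castSucc, Fin.val_last]
    rw [subComp_assoc, ← subComp_assoc (relabel _), subComp_relabel_arnouxRauzy (hπ.iterate n)]
    simp only [subComp_assoc]

end Substitution

theorem dBonacci_eq_subComp_arnouxRauzy_relabel (d : ℕ) [NeZero d] :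
    dBonacci d (NeZero.pos d) = subComp (arnouxRauzy 0) (relabel (· + 1)) := by
  funext j
  by_cases hlt : (j : ℕ) + 1 < d
  · have hsucc : j + 1 = ⟨j + 1, hlt⟩ := Fin.ext (by simp [Fin.val_add, Nat.mod_eq_of_lt hlt])
    simp [dBonacci, subComp, subApply, relabel, arnouxRauzy, hlt, hsucc]
  · have hsucc : j + 1 = 0 := by
      have hj : (j : ℕ) + 1 = d := by omega
      ext
      rw [Fin.val_add, Fin.val_one', Nat.add_mod_mod, hj, Nat.mod_self, Fin.val_zero]
    simp [dBonacci, subComp, subApply, relabel, arnouxRauzy, hlt, hsucc]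

/-- for the `d`-letter Arnoux–Rauzy substitutions, the composition
`α₁ ∘ α₂ ∘ ⋯ ∘ α_d` equals the `d`-th power of the `d`-bonacci substitution. -/
theorem stmt_4 (d : ℕ) (hd : 2 ≤ d) :
    (List.ofFn fun k : Fin d => arnouxRauzy k).foldr subComp (fun j => [j]) =
      subPow (dBonacci d (by omega)) d := by
  have : NeZero d := ⟨by omega⟩
  rw [dBonacci_eq_subComp_arnouxRauzy_relabel,
    subPow_arnouxRauzy_relabel (add_left_injective 1)]
  open Fin.NatCast in
  simp only [add_right_iterate, zero_add, nsmul_one, Fin.cast_val_eq_self, Fin.natCast_self,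
    add_zero]
  exact (subComp_singleton_right _).symm
end

section
/- Let x ∈ ℕ^d be a nonzero vector. Then there exists a word w over the alphabet {1,…,d} with abelianization l(w) = x such that for every prefix p of w, the projection of l(p) along x onto the hyperplane orthogonal to (1,…,1) has norm at most 1 − 1/(2d−2). -/
/-!
Positions in the word are slots `0, …, n - 1`, `n = ∑ xᵢ`. Requiring the discrepancy bound `1 - α`
on the two prefixes adjacent to the `σ`-th occurrence of letter `i` confines that occurrence to an
integer window of slots; a word exists as soon as Hall's marriage theorem assigns distinct slots to
all occurrences. For windows that are integer intervals, Hall's condition reduces, by cutting the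
union at a gap, to windows inside a single interval `[a, b]`. The occurrences of letter `i` fitting
into `[a, b]` are the integers of a real interval of length `(b - a + 1) xᵢ / n - 1 + 2α`, and
`2 (d - 1) α ≤ 1` is exactly what makes the rounding errors of these `d` counts add up to at most
`b - a + 1`.
-/

/-- The projection of `ℝ^d` along the vector `u` onto the hyperplane `1^⊥`. -/
noncomputable def projAlong {d : ℕ} (u y : Fin d → ℝ) : Fin d → ℝ :=
  y - ((∑ i, y i) / (∑ i, u i)) • u

open Finset Function

section IntervalHall

variable {α ι : Type*} [LinearOrder α] [LocallyFiniteOrder α] [Fintype ι] {lo hi : ι → α}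

theorem card_filter_Icc_subset_le (hle : ∀ j, lo j ≤ hi j)
    (hwin : ∀ a b, a ≤ b → #{j | a ≤ lo j ∧ hi j ≤ b} ≤ #(Icc a b)) (U : Finset α) :
    #{j | Icc (lo j) (hi j) ⊆ U} ≤ #U := by
  classical
  induction U using Finset.strongInduction with
  | H U ih =>
  rcases U.eq_empty_or_nonempty with rfl | hU
  · simp [(nonempty_Icc.2 (hle _)).ne_empty]
  set a := U.min' hU
  set b := U.max' hU
  by_cases hab : Icc a b ⊆ U
  · calc #{j | Icc (lo j) (hi j) ⊆ U} ≤ #{j | a ≤ lo j ∧ hi j ≤ b} := by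
          refine card_le_card fun j hj => ?_
          simp only [mem_filter, mem_univ, true_and] at hj ⊢
          exact ⟨U.min'_le _ (hj (left_mem_Icc.2 (hle j))),
            U.le_max' _ (hj (right_mem_Icc.2 (hle j)))⟩
      _ ≤ #(Icc a b) := hwin a b (U.min'_le _ (U.max'_mem hU))
      _ ≤ #U := card_le_card hab
  -- a gap `g` in `U` separates the intervals inside `U` into those left and right of it
  obtain ⟨g, hg, hgU⟩ := not_subset.1 hab
  rw [mem_Icc] at hg
  have hsplit : ∀ j, Icc (lo j) (hi j) ⊆ U →
      Icc (lo j) (hi j) ⊆ {z ∈ U | z < g} ∨ Icc (lo j) (hi j) ⊆ {z ∈ U | g < z} := by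
    intro j hj
    rcases lt_or_ge (hi j) g with h | h
    · exact .inl fun z hz => mem_filter.2 ⟨hj hz, (mem_Icc.1 hz).2.trans_lt h⟩
    · have : g < lo j := lt_of_not_ge fun h' => hgU (hj (mem_Icc.2 ⟨h', h⟩))
      exact .inr fun z hz => mem_filter.2 ⟨hj hz, this.trans_le (mem_Icc.1 hz).1⟩
  have hleft : {z ∈ U | z < g} ⊂ U := filter_ssubset.2 ⟨b, U.max'_mem hU, not_lt.2 hg.2⟩
  have hright : {z ∈ U | g < z} ⊂ U := filter_ssubset.2 ⟨a, U.min'_mem hU, not_lt.2 hg.1⟩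
  have hcard : #{z ∈ U | z < g} + #{z ∈ U | g < z} = #U := by
    have : {z ∈ U | g < z} = {z ∈ U | ¬z < g} := filter_congr fun z hz => by
      rw [not_lt, lt_iff_le_and_ne]
      exact ⟨fun h => h.1, fun h => ⟨h, fun e => hgU (e ▸ hz)⟩⟩
    rw [this, card_filter_add_card_filter_not]
  calc #{j | Icc (lo j) (hi j) ⊆ U}
      ≤ #(({j | Icc (lo j) (hi j) ⊆ {z ∈ U | z < g}} : Finset ι) ∪
          ({j | Icc (lo j) (hi j) ⊆ {z ∈ U | g < z}} : Finset ι)) :=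
        card_le_card fun j hj => by
          simpa only [mem_union, mem_filter, mem_univ, true_and] using hsplit j (by simpa using hj)
    _ ≤ #{z ∈ U | z < g} + #{z ∈ U | g < z} :=
        (card_union_le _ _).trans (add_le_add (ih _ hleft) (ih _ hright))
    _ = #U := hcard

theorem exists_injective_mem_Icc (hle : ∀ j, lo j ≤ hi j)
    (hwin : ∀ a b, a ≤ b → #{j | a ≤ lo j ∧ hi j ≤ b} ≤ #(Icc a b)) :
    ∃ f : ι → α, Injective f ∧ ∀ j, f j ∈ Icc (lo j) (hi j) := by
  classical
  refine (all_card_le_biUnion_card_iff_exists_injective fun j => Icc (lo j) (hi j)).1 fun s => ?_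
  refine le_trans ?_ (card_filter_Icc_subset_le hle hwin (s.biUnion fun j => Icc (lo j) (hi j)))
  exact card_le_card fun j hj =>
    mem_filter.2 ⟨mem_univ _, subset_biUnion_of_mem (fun j => Icc (lo j) (hi j)) hj⟩

end IntervalHall

section Word

variable {β γ : Type*} [DecidableEq γ]

theorem List.count_take_ofFn {n : ℕ} (v : Fin n → γ) (k : ℕ) (c : γ) :
    ((List.ofFn v).take k).count c = #{p : Fin n | (p : ℕ) < k ∧ v p = c} := by
  induction n generalizing k with
  | zero => simp
  | succ n ih =>
    cases k with
    | zero => simp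
    | succ k =>
      rw [List.ofFn_succ, List.take_succ_cons, List.count_cons, ih, Fin.card_filter_univ_succ']
      simp only [beq_iff_eq, Fin.coe_ofNat_eq_mod, Nat.zero_mod, lt_add_iff_pos_left,
        Order.lt_add_one_iff, zero_le, true_and, Fin.val_succ, Order.add_one_le_iff]
      exact Nat.add_comm _ _

theorem exists_list_count_take_eq [Fintype β] {n : ℕ} {f : β → ℕ} (hf : Injective f)
    (hfn : ∀ j, f j < n) (hcard : Fintype.card β = n) (c : β → γ) :
    ∃ w : List γ, w.length = n ∧ ∀ k a, (w.take k).count a = #{j | f j < k ∧ c j = a} := by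
  have hbij : Bijective fun j => (⟨f j, hfn j⟩ : Fin n) :=
    (Fintype.bijective_iff_injective_and_card _).2
      ⟨fun j j' h => hf (congrArg Fin.val h), by rw [hcard, Fintype.card_fin]⟩
  set e := Equiv.ofBijective _ hbij
  have hfe : ∀ p, f (e.symm p) = p := fun p => congrArg Fin.val (e.apply_symm_apply p)
  refine ⟨List.ofFn (c ∘ e.symm), List.length_ofFn, fun k a => ?_⟩
  rw [List.count_take_ofFn]
  exact card_equiv e.symm fun p => by simp [hfe]

end Word

section Slots

variable (n m : ℕ) (α : ℝ)

/-- In a word of length `n` containing a letter `m` times, the `σ`-th occurrence (from `0`) of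
that letter can stand at slot `p` with discrepancy at most `1 - α` on the prefixes of lengths `p`
and `p + 1` iff `earliestSlot n m α σ ≤ p ≤ latestSlot n m α σ`. -/
noncomputable def earliestSlot (σ : ℕ) : ℤ := ⌈(σ + α) * n / m⌉ - 1

noncomputable def latestSlot (σ : ℕ) : ℤ := ⌊(σ + 1 - α) * n / m⌋

variable {n m α}

theorem le_earliestSlot_iff (hn : 0 < n) (hm : 0 < m) {a : ℤ} {σ : ℕ} :
    a ≤ earliestSlot n m α σ ↔ a * (m / n : ℝ) - α < σ := by
  have hn' : (0 : ℝ) < n := by exact_mod_cast hn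
  have hm' : (0 : ℝ) < m := by exact_mod_cast hm
  rw [earliestSlot, Int.le_sub_one_iff, Int.lt_ceil, lt_div_iff₀ hm', sub_lt_iff_lt_add,
    ← mul_div_assoc, div_lt_iff₀ hn']

theorem latestSlot_lt_iff (hn : 0 < n) (hm : 0 < m) {b : ℤ} {σ : ℕ} :
    latestSlot n m α σ < b ↔ (σ : ℝ) < b * (m / n : ℝ) - 1 + α := by
  have hn' : (0 : ℝ) < n := by exact_mod_cast hn
  have hm' : (0 : ℝ) < m := by exact_mod_cast hm
  rw [latestSlot, Int.floor_lt, div_lt_iff₀ hm', ← mul_div_assoc, ← sub_lt_iff_lt_add,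
    lt_sub_iff_add_lt, lt_div_iff₀ hn', sub_add_eq_add_sub]

theorem earliestSlot_le_latestSlot (hα : 2 * α ≤ 1) (σ : ℕ) :
    earliestSlot n m α σ ≤ latestSlot n m α σ := by
  have : (σ + α) * n / m ≤ (σ + 1 - α) * n / m := by gcongr; linarith
  rw [earliestSlot, latestSlot, sub_le_iff_le_add]
  exact (Int.ceil_le_floor_add_one _).trans (by gcongr)

theorem earliestSlot_nonneg (hn : 0 < n) (hm : 0 < m) (hα : 0 < α) (σ : ℕ) :
    0 ≤ earliestSlot n m α σ :=
  (le_earliestSlot_iff hn hm).2 (by push_cast; linarith [σ.cast_nonneg (α := ℝ)])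

theorem latestSlot_lt (hn : 0 < n) (hα : 0 < α) {σ : ℕ} (hσ : σ < m) :
    latestSlot n m α σ < n := by
  have hn' : (n : ℝ) ≠ 0 := by positivity
  have hσ' : (σ : ℝ) + 1 ≤ m := by exact_mod_cast hσ
  rw [latestSlot_lt_iff hn (by omega)]
  push_cast
  rw [mul_div_cancel₀ _ hn']
  linarith

theorem card_filter_slots_le (hn : 0 < n) (a b : ℤ) :
    #{σ : Fin m | a ≤ earliestSlot n m α σ ∧ latestSlot n m α σ ≤ b} ≤
      (⌈(b + 1) * (m / n : ℝ) - 1 + α⌉ - ⌊a * (m / n : ℝ) - α⌋ - 1).toNat := by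
  rw [← Int.card_Ioo]
  refine card_le_card_of_injOn (fun σ => (σ : ℤ)) (fun σ hσ => ?_)
    (fun σ _ τ _ h => Fin.ext (Int.natCast_inj.1 h))
  simp only [coe_filter, mem_univ, true_and, Set.mem_ofPred_eq] at hσ
  rw [le_earliestSlot_iff hn σ.pos, ← Int.lt_add_one_iff, latestSlot_lt_iff hn σ.pos] at hσ
  simp only [mem_coe, mem_Ioo, Int.floor_lt, Int.lt_ceil]
  push_cast at hσ ⊢
  exact hσ

end Slots

section Rounding

variable {ι : Type*} [Fintype ι] {ρ : ι → ℝ} {α : ℝ}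

theorem sum_ceil_sub_floor_le (hρ : ∑ i, ρ i = 1) (hα : Fintype.card ι * α ≤ 1) (a b : ℤ) :
    ∑ i, (⌈(b + 1) * ρ i - 1 + α⌉ - ⌊a * ρ i - α⌋ - 1) ≤ b + 1 - a := by
  have hne : (univ : Finset ι).Nonempty := nonempty_of_sum_ne_zero (by rw [hρ]; exact one_ne_zero)
  have hceil : ((∑ i, ⌈(b + 1) * ρ i - 1 + α⌉ : ℤ) : ℝ) < b + 1 + 1 :=
    calc ((∑ i, ⌈(b + 1) * ρ i - 1 + α⌉ : ℤ) : ℝ)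
        < ∑ i, ((b + 1) * ρ i + α) := by
          push_cast
          exact sum_lt_sum_of_nonempty hne fun i _ => by
            linarith [Int.ceil_lt_add_one ((b + 1) * ρ i - 1 + α)]
      _ = b + 1 + Fintype.card ι * α := by
          rw [sum_add_distrib, ← mul_sum, hρ, sum_const, card_univ, nsmul_eq_mul, mul_one]
      _ ≤ b + 1 + 1 := by linarith
  have hfloor : (a - Fintype.card ι - 1 : ℝ) < ((∑ i, ⌊a * ρ i - α⌋ : ℤ) : ℝ) :=
    calc (a - Fintype.card ι - 1 : ℝ)
        ≤ ∑ i, (a * ρ i - α - 1) := by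
          simp only [sum_sub_distrib, ← mul_sum, hρ, sum_const, card_univ, nsmul_eq_mul]
          linarith
      _ < ((∑ i, ⌊a * ρ i - α⌋ : ℤ) : ℝ) := by
          push_cast
          exact sum_lt_sum_of_nonempty hne fun i _ => Int.sub_one_lt_floor _
  have hceil' : ∑ i, ⌈(b + 1) * ρ i - 1 + α⌉ ≤ b + 1 := by
    rw [← Int.lt_add_one_iff]; exact_mod_cast hceil
  have hfloor' : a - Fintype.card ι ≤ ∑ i, ⌊a * ρ i - α⌋ := by
    rw [← Int.sub_one_lt_iff]; exact_mod_cast hfloor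
  simp only [sum_sub_distrib, sum_const, card_univ, nsmul_eq_mul, mul_one]
  linarith

theorem sum_ceil_sub_floor_le_of_card_lt (hρ0 : ∀ i, 0 ≤ ρ i) (hρ : ∑ i, ρ i = 1)
    (hα0 : 0 ≤ α) (hα : 2 * (Fintype.card ι - 1 : ℝ) * α ≤ 1) {a b : ℤ} (hab : a ≤ b)
    {P : Finset ι} (hP : #P < Fintype.card ι) :
    ∑ i ∈ P, (⌈(b + 1) * ρ i - 1 + α⌉ - ⌊a * ρ i - α⌋ - 1) ≤ b + 1 - a := by
  rcases P.eq_empty_or_nonempty with rfl | hPne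
  · rw [sum_empty]; omega
  have hPρ : ∑ i ∈ P, ρ i ≤ 1 := hρ ▸ sum_le_sum_of_subset_of_nonneg (subset_univ P)
    fun i _ _ => hρ0 i
  have hPα : #P * (2 * α) ≤ 1 := by
    have : (#P : ℝ) ≤ Fintype.card ι - 1 := by
      rw [le_sub_iff_add_le]; exact_mod_cast hP
    nlinarith
  have hL : (0 : ℝ) ≤ b + 1 - a := by
    have : (a : ℝ) ≤ b := by exact_mod_cast hab
    linarith
  have key : ((∑ i ∈ P, (⌈(b + 1) * ρ i - 1 + α⌉ - ⌊a * ρ i - α⌋ - 1) : ℤ) : ℝ) < b + 1 - a + 1 :=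
    calc ((∑ i ∈ P, (⌈(b + 1) * ρ i - 1 + α⌉ - ⌊a * ρ i - α⌋ - 1) : ℤ) : ℝ)
        < ∑ i ∈ P, ((b + 1 - a) * ρ i + 2 * α) := by
          push_cast
          refine sum_lt_sum_of_nonempty hPne fun i _ => ?_
          linarith [Int.ceil_lt_add_one ((b + 1) * ρ i - 1 + α), Int.sub_one_lt_floor (a * ρ i - α)]
      _ = (b + 1 - a) * ∑ i ∈ P, ρ i + #P * (2 * α) := by
          rw [sum_add_distrib, ← mul_sum, sum_const, nsmul_eq_mul]
      _ ≤ b + 1 - a + 1 := by nlinarith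
  rw [← Int.lt_add_one_iff]
  exact_mod_cast key

theorem sum_toNat_ceil_sub_floor_le (hρ0 : ∀ i, 0 ≤ ρ i) (hρ : ∑ i, ρ i = 1)
    (hα0 : 0 ≤ α) (hα1 : 2 * α ≤ 1) (hα : 2 * (Fintype.card ι - 1 : ℝ) * α ≤ 1) {a b : ℤ}
    (hab : a ≤ b) :
    ∑ i, (⌈(b + 1) * ρ i - 1 + α⌉ - ⌊a * ρ i - α⌋ - 1).toNat ≤ (b + 1 - a).toNat := by
  set N : ι → ℤ := fun i => ⌈(b + 1) * ρ i - 1 + α⌉ - ⌊a * ρ i - α⌋ - 1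
  rw [Int.le_toNat (by omega)]
  push_cast
  simp only [Int.toNat_eq_max]
  have hmax : ∑ i, max (N i) 0 = ∑ i ∈ {i | 0 ≤ N i}, N i := by
    rw [sum_filter]
    exact sum_congr rfl fun i _ => by split_ifs with h <;> omega
  rw [hmax]
  by_cases hall : ∀ i, 0 ≤ N i
  · rw [filter_true_of_mem fun i _ => hall i]
    refine sum_ceil_sub_floor_le hρ ?_ a b
    linarith
  · obtain ⟨j, hj⟩ := not_forall.1 hall
    refine sum_ceil_sub_floor_le_of_card_lt hρ0 hρ hα0 hα hab ?_
    exact card_lt_univ_of_notMem (by simpa using hj)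

end Rounding

section Counting

theorem card_filter_sigma_fst_eq {ι : Type*} {κ : ι → Type*} [Fintype ι] [DecidableEq ι]
    [∀ i, Fintype (κ i)] (p : (Σ i, κ i) → Prop) [DecidablePred p] (i : ι) :
    #{it | p it ∧ it.1 = i} = #{σ : κ i | p ⟨i, σ⟩} := by
  refine (card_bij (fun σ _ => ⟨i, σ⟩) (by simp) (by simp) ?_).symm
  rintro ⟨i', σ⟩ h
  obtain ⟨hp, rfl⟩ := by simpa using h
  exact ⟨σ, by simpa using hp, rfl⟩

theorem le_card_of_forall_lt_mem {m : ℕ} {t : ℝ} (ht : t ≤ m) {s : Finset (Fin m)}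
    (hs : ∀ σ : Fin m, (σ : ℝ) < t → σ ∈ s) : t ≤ #s := by
  have hsub : ({σ : Fin m | (σ : ℕ) < ⌈t⌉₊} : Finset (Fin m)) ⊆ s := fun σ hσ =>
    hs σ (Nat.lt_ceil.1 (by simpa using hσ))
  calc t ≤ min (m : ℝ) ⌈t⌉₊ := le_min ht (Nat.le_ceil t)
    _ = #({σ : Fin m | (σ : ℕ) < ⌈t⌉₊} : Finset (Fin m)) := by
        rw [Fin.card_filter_val_lt]; push_cast; rfl
    _ ≤ #s := by exact_mod_cast card_le_card hsub

theorem card_le_of_forall_mem_add_one_le {m : ℕ} {t : ℝ} (ht : 0 ≤ t) {s : Finset (Fin m)}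
    (hs : ∀ σ ∈ s, (σ : ℝ) + 1 ≤ t) : (#s : ℝ) ≤ t := by
  have hsub : s ⊆ ({σ : Fin m | (σ : ℕ) < ⌊t⌋₊} : Finset (Fin m)) := fun σ hσ =>
    mem_filter.2 ⟨mem_univ _, Nat.lt_iff_add_one_le.2 (Nat.le_floor (by exact_mod_cast hs σ hσ))⟩
  calc (#s : ℝ) ≤ #({σ : Fin m | (σ : ℕ) < ⌊t⌋₊} : Finset (Fin m)) := by
        exact_mod_cast card_le_card hsub
    _ ≤ ⌊t⌋₊ := by rw [Fin.card_filter_val_lt]; exact_mod_cast min_le_right _ _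
    _ ≤ t := Nat.floor_le ht

end Counting

section Chairman

variable {ι : Type*} [Fintype ι] [DecidableEq ι] {n : ℕ} {α : ℝ}

theorem card_filter_window_le {x : ι → ℕ} (hsum : ∑ i, x i = n) (hn : 0 < n) (hα0 : 0 ≤ α)
    (hα1 : 2 * α ≤ 1) (hα : 2 * (Fintype.card ι - 1 : ℝ) * α ≤ 1) {a b : ℤ} (hab : a ≤ b) :
    #{it : Σ i, Fin (x i) |
        a ≤ earliestSlot n (x it.1) α it.2 ∧ latestSlot n (x it.1) α it.2 ≤ b} ≤ #(Icc a b) := by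
  have hn' : (n : ℝ) ≠ 0 := by positivity
  have hρ : ∑ i, (x i / n : ℝ) = 1 := by
    rw [← sum_div, ← Nat.cast_sum, hsum, div_self hn']
  rw [card_eq_sum_card_fiberwise (f := Sigma.fst) (t := univ) fun _ _ => mem_coe.2 (mem_univ _),
    Int.card_Icc]
  simp only [filter_filter, card_filter_sigma_fst_eq]
  exact (sum_le_sum fun i _ => card_filter_slots_le hn a b).trans
    (sum_toNat_ceil_sub_floor_le (fun i => by positivity) hρ hα0 hα1 hα hab)

theorem exists_word_abs_count_take_sub_le (x : ι → ℕ) (hsum : ∑ i, x i = n) (hn : 0 < n)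
    (hα0 : 0 < α) (hα1 : 2 * α ≤ 1) (hα : 2 * (Fintype.card ι - 1 : ℝ) * α ≤ 1) :
    ∃ w : List ι, w.length = n ∧ (∀ i, w.count i = x i) ∧
      ∀ k ≤ n, ∀ i, |((w.take k).count i : ℝ) - k * (x i / n : ℝ)| ≤ 1 - α := by
  obtain ⟨f, hf, hfK⟩ := exists_injective_mem_Icc
    (lo := fun it : Σ i, Fin (x i) => earliestSlot n (x it.1) α it.2)
    (hi := fun it => latestSlot n (x it.1) α it.2)
    (fun it => earliestSlot_le_latestSlot hα1 _)
    (fun a b hab => card_filter_window_le hsum hn hα0.le hα1 hα hab)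
  have hf0 : ∀ it, 0 ≤ f it := fun it =>
    (earliestSlot_nonneg hn it.2.pos hα0 _).trans (mem_Icc.1 (hfK it)).1
  have hfn : ∀ it, f it < n := fun it =>
    (mem_Icc.1 (hfK it)).2.trans_lt (latestSlot_lt hn hα0 it.2.isLt)
  obtain ⟨w, hlen, hw⟩ := exists_list_count_take_eq (n := n) (f := fun it => (f it).toNat)
    (fun it it' h => hf (by simpa [Int.toNat_of_nonneg (hf0 _)] using congrArg Int.ofNat h))
    (fun it => by have := hf0 it; have := hfn it; omega)
    (by simp [hsum]) Sigma.fst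
  have hcount : ∀ k i, (w.take k).count i = #{σ : Fin (x i) | f ⟨i, σ⟩ < k} := fun k i => by
    rw [hw, card_filter_sigma_fst_eq (fun it => (f it).toNat < k)]
    congr! 2 with σ
    have := hf0 ⟨i, σ⟩
    omega
  refine ⟨w, hlen, fun i => ?_, fun k hk i => ?_⟩
  · rw [← List.take_of_length_le hlen.le, hcount, filter_true_of_mem fun σ _ => hfn _,
      card_univ, Fintype.card_fin]
  have hn' : (0 : ℝ) < n := by exact_mod_cast hn
  have hkx : k * (x i / n : ℝ) ≤ x i := by
    rw [mul_div_assoc', div_le_iff₀ hn', mul_comm]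
    gcongr
  rw [hcount, abs_le]
  constructor
  · have := le_card_of_forall_lt_mem (s := {σ : Fin (x i) | f ⟨i, σ⟩ < k})
      (t := k * (x i / n : ℝ) - 1 + α) (by linarith) fun σ hσ => mem_filter.2 ⟨mem_univ _,
        (mem_Icc.1 (hfK ⟨i, σ⟩)).2.trans_lt ((latestSlot_lt_iff hn σ.pos).2 (by exact_mod_cast hσ))⟩
    linarith
  · have := card_le_of_forall_mem_add_one_le (s := {σ : Fin (x i) | f ⟨i, σ⟩ < k})
      (t := k * (x i / n : ℝ) + 1 - α) (by linarith [show 0 ≤ k * (x i / n : ℝ) by positivity])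
      fun σ hσ => by
        have hlt := (mem_Icc.1 (hfK ⟨i, σ⟩)).1.trans_lt (mem_filter.1 hσ).2
        have := mt (le_earliestSlot_iff hn σ.pos).2 (not_le.2 hlt)
        push_cast at this
        linarith
    linarith

end Chairman

theorem List.sum_count_eq_length {ι : Type*} [Fintype ι] [DecidableEq ι] (l : List ι) :
    ∑ i, l.count i = l.length := by
  simpa using Multiset.sum_count_eq_card (s := univ) (m := (l : Multiset ι)) fun _ _ => mem_univ _

theorem projAlong_count_apply {d : ℕ} (x : Fin d → ℕ) (p : List (Fin d)) (i : Fin d) :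
    projAlong (fun i => (x i : ℝ)) (fun i => (p.count i : ℝ)) i =
      p.count i - p.length * (x i / ∑ j, x j : ℝ) := by
  simp only [projAlong, Pi.sub_apply, Pi.smul_apply, smul_eq_mul, ← Nat.cast_sum,
    List.sum_count_eq_length]
  ring

/-- chairman assignment theorem of Meijer/Tijdeman: for every nonzero
`x ∈ ℕ^d` there is a word `w` over `{1,…,d}` with abelianization `x` such that for every
prefix `p` of `w`, the projection of `l(p)` along `x` onto `1^⊥` has (sup) norm at most
`1 − 1/(2d−2)`. -/
theorem stmt_6 {d : ℕ} (x : Fin d → ℕ) (hx : x ≠ 0) :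
    ∃ w : List (Fin d), (∀ i, w.count i = x i) ∧
      ∀ p : List (Fin d), p <+: w →
        ‖projAlong (fun i => (x i : ℝ)) (fun i => (p.count i : ℝ))‖ ≤
          1 - 1 / (2 * (d : ℝ) - 2) := by
  have hn : 0 < ∑ i, x i := by
    obtain ⟨i, hi⟩ := Function.ne_iff.1 hx
    exact sum_pos' (fun i _ => Nat.zero_le _) ⟨i, mem_univ _, Nat.pos_of_ne_zero hi⟩
  -- for `d ≤ 1` the right-hand side is at least `1` (`1 / 0 = 0` in Lean), so `α = 1 / 2` works
  obtain ⟨α, hα0, hα1, hα, hαd⟩ : ∃ α : ℝ, 0 < α ∧ 2 * α ≤ 1 ∧ 2 * ((d : ℝ) - 1) * α ≤ 1 ∧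
      1 - α ≤ 1 - 1 / (2 * (d : ℝ) - 2) := by
    rcases Nat.lt_or_ge d 2 with hd | hd
    · have hd' : (d : ℝ) ≤ 1 := by exact_mod_cast Nat.lt_succ_iff.1 hd
      refine ⟨1 / 2, by norm_num, by norm_num, by nlinarith, ?_⟩
      have : 1 / (2 * (d : ℝ) - 2) ≤ 0 := div_nonpos_of_nonneg_of_nonpos zero_le_one (by linarith)
      linarith
    · have hd' : (2 : ℝ) ≤ d := by exact_mod_cast hd
      refine ⟨1 / (2 * d - 2), one_div_pos.2 (by linarith), ?_, ?_, le_rfl⟩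
      · rw [mul_one_div, div_le_one (by linarith)]; linarith
      · rw [mul_one_div, div_le_one (by linarith)]; linarith
  obtain ⟨w, hlen, hcount, hbound⟩ :=
    exists_word_abs_count_take_sub_le x rfl hn hα0 hα1 (by simpa using hα)
  refine ⟨w, hcount, fun p hp => ((pi_norm_le_iff_of_nonneg (by linarith)).2 fun i => ?_).trans hαd⟩
  have := hbound p.length (hp.length_le.trans hlen.le) i
  rwa [← List.prefix_iff_eq_take.1 hp, ← projAlong_count_apply, ← Real.norm_eq_abs] at this
end

section
/- Let ω be an infinite word over a finite alphabet A with |A| = d. Then every non-empty factor w of ω can be written as w = v₁a₁v₂a₂⋯v_ℓa_ℓ with 1 ≤ ℓ ≤ d, where the a_j ∈ A are pairwise distinct letters and each v_j is a (possibly empty) return word of ω to the letter a_j, i.e., there exist p ∈ A* such that both p a_j and p v_j a_j occur as prefixes of appropriate shifted occurrences in ω (formally: v_j belongs to the set Q = {v : p a occurs and p v a occurs as prefixes of ω for some p ∈ A*, a ∈ A}). -/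
/-!
Peel `w` greedily: with `a` its first letter, cut `w` right after the last occurrence of `a`,
`w = (v a) r` with `a ∉ r`, and recurse on `r`. Each block `v a` begins and ends with `a`, so if
it occurs in `ω` at position `m`, the prefix `p = ω[0, m)` witnesses `v ∈ Q`. The block letters
are pairwise distinct because each is absent from everything after its block; hence there are
at most `d` of them.
-/

/-- `l` is a prefix of the infinite word `ω`. -/
def IsPrefOf {d : ℕ} (ω : ℕ → Fin d) (l : List (Fin d)) : Prop :=
  l = (List.range l.length).map ω

/-- The set `Q` of return-like words of the infinite word `ω`: words `v` such that for some
`p ∈ A*` and letter `a`, both `p a` and `p v a` are prefixes of `ω`. -/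
def returnWords {d : ℕ} (ω : ℕ → Fin d) : Set (List (Fin d)) :=
  {v | ∃ (p : List (Fin d)) (a : Fin d), IsPrefOf ω (p ++ [a]) ∧ IsPrefOf ω (p ++ v ++ [a])}

/-- `w` is a factor of the infinite word `ω`. -/
def IsFactorOf {d : ℕ} (ω : ℕ → Fin d) (w : List (Fin d)) : Prop :=
  ∃ m : ℕ, w = (List.range w.length).map fun k => ω (m + k)

theorem List.exists_eq_append_cons_notMem {α : Type*} {b : α} :
    ∀ {l : List α}, b ∈ l → ∃ v r, l = v ++ b :: r ∧ b ∉ r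
  | c :: t, h => by
    by_cases hb : b ∈ t
    · obtain ⟨v, r, rfl, hr⟩ := exists_eq_append_cons_notMem hb
      exact ⟨c :: v, r, rfl, hr⟩
    · obtain rfl : b = c := by simpa [hb] using h
      exact ⟨[], t, rfl, hb⟩

theorem List.exists_bordered_block_decomposition {α : Type*} :
    ∀ w : List α, ∃ D : List (List α × α), (D.map Prod.snd).Nodup ∧
      (∀ x ∈ D, (x.1 ++ [x.2]).head? = some x.2) ∧ w = (D.map fun x => x.1 ++ [x.2]).flatten
  | [] => ⟨[], by simp⟩
  | b :: t => by
    obtain ⟨v, r, hsplit, hr⟩ := exists_eq_append_cons_notMem (mem_cons_self (a := b) (l := t))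
    have : r.length ≤ t.length := by
      have := congrArg length hsplit
      simp only [length_cons, length_append] at this
      omega
    obtain ⟨D, hnodup, hhead, rfl⟩ := exists_bordered_block_decomposition r
    refine ⟨(v, b) :: D, ?_, ?_, by simp [hsplit]⟩
    · refine nodup_cons.mpr ⟨fun hb => hr ?_, hnodup⟩
      obtain ⟨x, hx, rfl⟩ := mem_map.mp hb
      exact mem_flatten.mpr ⟨_, mem_map_of_mem hx, by simp⟩
    · refine forall_mem_cons.mpr ⟨?_, hhead⟩
      rcases v with _ | ⟨c, v⟩
      · rfl
      · obtain ⟨rfl, -⟩ := cons_eq_cons.mp hsplit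
        rfl
termination_by w => w.length

section

variable {d : ℕ} {ω : ℕ → Fin d}

theorem IsFactorOf.of_infix {u w : List (Fin d)} (hw : IsFactorOf ω w) (h : u <:+: w) :
    IsFactorOf ω u := by
  obtain ⟨s, t, rfl⟩ := h
  obtain ⟨m, hm⟩ := hw
  refine ⟨m + s.length, List.ext_getElem (by simp) fun k hk _ => ?_⟩
  have := List.getElem_of_eq hm (i := s.length + k) (by simp; omega)
  simpa [List.getElem_append_right, List.getElem_append_left hk, add_assoc] using this

theorem mem_returnWords_of_isFactorOf {v : List (Fin d)} {a : Fin d}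
    (hfac : IsFactorOf ω (v ++ [a])) (hhead : (v ++ [a]).head? = some a) :
    v ∈ returnWords ω := by
  obtain ⟨m, hm⟩ := hfac
  have hωm : ω m = a := by
    rw [hm] at hhead
    simpa [List.range_succ_eq_map] using hhead
  refine ⟨(List.range m).map ω, a, ?_, ?_⟩ <;> unfold IsPrefOf
  · simp [List.range_succ, hωm]
  · rw [List.append_assoc, hm]
    simp [List.range_add]

end

/-- every non-empty factor `w` of an infinite word `ω` over a `d`-letter
alphabet can be written `w = v₁a₁v₂a₂⋯v_ℓa_ℓ` with `1 ≤ ℓ ≤ d`, pairwise distinct letters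
`a_j`, and each `v_j` a return-like word of `ω`. -/
theorem stmt_11 {d : ℕ} (ω : ℕ → Fin d) (w : List (Fin d)) (hw : IsFactorOf ω w)
    (hne : w ≠ []) :
    ∃ ℓ : ℕ, 1 ≤ ℓ ∧ ℓ ≤ d ∧
      ∃ (a : Fin ℓ → Fin d) (v : Fin ℓ → List (Fin d)),
        Function.Injective a ∧ (∀ j, v j ∈ returnWords ω) ∧
        w = (List.ofFn fun j => v j ++ [a j]).flatten := by
  obtain ⟨D, hnodup, hhead, rfl⟩ := w.exists_bordered_block_decomposition
  have hD : D ≠ [] := by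
    rintro rfl
    simp at hne
  refine ⟨D.length, List.length_pos_iff.mpr hD, by simpa using hnodup.length_le_card,
    fun j => D[j].2, fun j => D[j].1, fun i j hij => ?_, fun j => ?_, ?_⟩
  · have : (D.map Prod.snd)[i.1]'(by simp) = (D.map Prod.snd)[j.1]'(by simp) := by
      simpa using hij
    exact Fin.ext (hnodup.getElem_inj_iff.mp this)
  · have hmem := List.getElem_mem (l := D) j.2
    exact mem_returnWords_of_isFactorOf
      (hw.of_infix (List.infix_of_mem_flatten (List.mem_map_of_mem hmem))) (hhead _ hmem)
  · exact congrArg List.flatten (List.ofFn_getElem_eq_map D fun x => x.1 ++ [x.2]).symm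
end

section
/- Let R_t be a minimal translation on 𝕋^{d−1}, let F ⊂ ℝ^{d−1} be a bounded measurable fundamental domain with a natural measurable partition {F₁,…,F_d} and translation vectors t₁,…,t_d ∈ ℝ^{d−1} with t_i ≡ t (mod ℤ^{d−1}) and t_i + F_i ⊂ F. Set u_i = λ(F_i) (Lebesgue measure). Then Σ_{i=1}^d u_i t_i = 0. -/
/-!
The exchange of domains `S` preserves `λ|_F`, so the displacement `x ↦ S x - x`, which is
integrable because `F` is bounded, has integral `∫_F S - ∫_F id = 0` over `F`. On the other hand
it equals `tᵢ` almost everywhere on `Fᵢ`, so the same integral is `∑ λ(Fᵢ) tᵢ`.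
-/

open MeasureTheory Set

theorem MeasureTheory.MeasurePreserving.integral_comp_sub_eq_zero {α E : Type*}
    [MeasurableSpace α] [NormedAddCommGroup E] [NormedSpace ℝ E] {μ : Measure α} {S : α → α}
    (hS : MeasurePreserving S μ μ) {f : α → E} (hf : Integrable f μ) :
    ∫ x, (f (S x) - f x) ∂μ = 0 := by
  have hf' : AEStronglyMeasurable f (μ.map S) := by
    rw [hS.map_eq]; exact hf.aestronglyMeasurable
  have hcomp : ∫ x, f (S x) ∂μ = ∫ x, f x ∂μ := by
    rw [← integral_map hS.aemeasurable hf', hS.map_eq]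
  rw [integral_sub (f := fun x => f (S x)) (hS.integrable_comp_of_integrable hf) hf, hcomp,
    sub_self]

theorem MeasureTheory.integrableOn_id_of_isBounded {E : Type*} [NormedAddCommGroup E]
    [ProperSpace E] [MeasurableSpace E] [OpensMeasurableSpace E] {μ : Measure E}
    [IsLocallyFiniteMeasure μ] {s : Set E} (hs : Bornology.IsBounded s) :
    IntegrableOn (fun x => x) s μ :=
  (continuous_id.continuousOn.integrableOn_compact hs.isCompact_closure).mono_set subset_closure

section PiecewiseTranslation

variable {ι E : Type*} [NormedAddCommGroup E] [MeasurableSpace E] {μ : Measure E}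
  {Fi : ι → Set E} {ti : ι → E} {S : E → E}

theorem ae_restrict_sub_eq_of_eq_add_on_interior [Countable ι] {i : ι} (hFi : MeasurableSet (Fi i))
    (hdisj : ∀ i j, i ≠ j → μ (Fi i ∩ Fi j) = 0)
    (hS : ∀ i, ∀ x ∈ interior (Fi i), S x = x + ti i)
    (hae : μ ((⋃ i, Fi i) \ ⋃ i, interior (Fi i)) = 0) :
    ∀ᵐ x ∂μ.restrict (Fi i), S x - x = ti i := by
  have hgood : ∀ᵐ x ∂μ,
      x ∉ ((⋃ j, Fi j) \ ⋃ j, interior (Fi j)) ∪ ⋃ j, ⋃ _ : j ≠ i, Fi i ∩ Fi j :=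
    measure_eq_zero_iff_ae_notMem.1 <| measure_union_null hae <|
      measure_iUnion_null fun j => measure_iUnion_null fun hj => hdisj i j (Ne.symm hj)
  rw [ae_restrict_iff' hFi]
  filter_upwards [hgood] with x hx hxi
  have hxint : x ∈ ⋃ j, interior (Fi j) :=
    by_contra fun h => hx (Or.inl ⟨mem_iUnion.2 ⟨i, hxi⟩, h⟩)
  obtain ⟨j, hxj⟩ := mem_iUnion.1 hxint
  obtain rfl : j = i :=
    by_contra fun hji => hx (Or.inr (mem_iUnion₂.2 ⟨j, hji, hxi, interior_subset hxj⟩))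
  rw [hS j x hxj, add_sub_cancel_left]

theorem setIntegral_iUnion_sub_eq_sum_smul [Fintype ι] [NormedSpace ℝ E] [CompleteSpace E]
    (hFmeas : ∀ i, MeasurableSet (Fi i))
    (hdisj : ∀ i j, i ≠ j → μ (Fi i ∩ Fi j) = 0)
    (hS : ∀ i, ∀ x ∈ interior (Fi i), S x = x + ti i)
    (hae : μ ((⋃ i, Fi i) \ ⋃ i, interior (Fi i)) = 0) (hfin : ∀ i, μ (Fi i) ≠ ⊤) :
    ∫ x in ⋃ i, Fi i, (S x - x) ∂μ = ∑ i, μ.real (Fi i) • ti i := by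
  have hpiece : ∀ i, (fun x => S x - x) =ᵐ[μ.restrict (Fi i)] fun _ => ti i := fun i =>
    ae_restrict_sub_eq_of_eq_add_on_interior (hFmeas i) hdisj hS hae
  have hint : IntegrableOn (fun x => S x - x) (⋃ i, Fi i) μ :=
    integrableOn_finite_iUnion.2 fun i =>
      (integrableOn_const (hfin i)).congr_fun_ae (hpiece i).symm
  rw [integral_iUnion_ae (fun i => (hFmeas i).nullMeasurableSet) hdisj hint, tsum_fintype]
  exact Finset.sum_congr rfl fun i _ => by rw [integral_congr_ae (hpiece i), setIntegral_const]

end PiecewiseTranslation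

theorem stmt_12_general (d : ℕ)
    (F : Set (Fin (d - 1) → ℝ)) (Fi : Fin d → Set (Fin (d - 1) → ℝ))
    (ti : Fin d → Fin (d - 1) → ℝ)
    (hFbdd : Bornology.IsBounded F)
    (hFmeas : ∀ i, MeasurableSet (Fi i))
    (hcover : F = ⋃ i, Fi i)
    (hdisj : ∀ i j, i ≠ j → volume (Fi i ∩ Fi j) = 0)
    (S : (Fin (d - 1) → ℝ) → (Fin (d - 1) → ℝ))
    (hS : ∀ i, ∀ x ∈ interior (Fi i), S x = x + ti i)
    (hae : volume (F \ ⋃ i, interior (Fi i)) = 0)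
    (herg : Ergodic S (volume.restrict F)) :
    ∑ i, (volume (Fi i)).toReal • ti i = 0 := by
  subst hcover
  have hfin : ∀ i, volume (Fi i) ≠ ⊤ := fun i =>
    (hFbdd.subset (subset_iUnion Fi i)).measure_lt_top.ne
  change ∑ i, volume.real (Fi i) • ti i = 0
  rw [← setIntegral_iUnion_sub_eq_sum_smul hFmeas hdisj hS hae hfin]
  exact herg.toMeasurePreserving.integral_comp_sub_eq_zero (f := fun x => x)
    (integrableOn_id_of_isBounded hFbdd)

/-- let `R_t` be (coded by) an exchange of domains `S` on a bounded
measurable fundamental domain `F ⊂ ℝ^{d−1}` of measure 1, with natural measurable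
partition `{F₁,…,F_d}` and translation vectors `t₁,…,t_d ≡ t (mod ℤ^{d−1})` such that
`t_i + F_i ⊂ F`; suppose `S` is ergodic on `F`. With `u_i = λ(F_i)` one has
`∑ u_i t_i = 0`. -/
theorem stmt_12 (d : ℕ) (hd : 1 ≤ d)
    (F : Set (Fin (d - 1) → ℝ)) (Fi : Fin d → Set (Fin (d - 1) → ℝ))
    (t : Fin (d - 1) → ℝ) (ti : Fin d → Fin (d - 1) → ℝ)
    (hFbdd : Bornology.IsBounded F)
    (hFvol : volume F = 1)
    (hFmeas : ∀ i, MeasurableSet (Fi i))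
    (hcover : F = ⋃ i, Fi i)
    (hdisj : ∀ i j, i ≠ j → volume (Fi i ∩ Fi j) = 0)
    (hti : ∀ i, ∃ z : Fin (d - 1) → ℤ, ti i = fun k => t k + (z k : ℝ))
    (htiF : ∀ i, (fun x => x + ti i) '' Fi i ⊆ F)
    (S : (Fin (d - 1) → ℝ) → (Fin (d - 1) → ℝ))
    (hS : ∀ i, ∀ x ∈ interior (Fi i), S x = x + ti i)
    (hSmaps : Set.MapsTo S F F)
    (hae : volume (F \ ⋃ i, interior (Fi i)) = 0)
    (herg : Ergodic S (volume.restrict F)) :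
    ∑ i, (volume (Fi i)).toReal • ti i = 0 :=
  stmt_12_general d F Fi ti hFbdd hFmeas hcover hdisj S hS hae herg
end

section
/- Let (X, Σ) be a subshift over {1,…,d} that is a natural coding of a minimal translation R_t on 𝕋^{d−1} with respect to a partition {F₁,…,F_d} of a bounded fundamental domain F. Then the language of X is C-balanced for C = 2c·diam(F), where c > 0 satisfies ‖x‖_∞ ≤ c‖Nx‖_∞ for all x ∈ 1^⊥ and N is the matrix of translation vectors. -/
/-! If two words `v, w` of the language are realised by orbit segments `x ↦ x + N l(v)` and
`y ↦ y + N l(w)` inside `F`, then `N (l(v) - l(w))` is the difference of two vectors joining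
points of `F`, so its norm is at most `2 diam F`. For words of equal length `l(v) - l(w)`
lies in `1^⊥`, where `‖·‖ ≤ c ‖N ·‖`, and each coordinate is bounded by the sup norm. -/

open Matrix

/-- The paper's `l(w)`. -/
def parikhVector {α : Type*} [DecidableEq α] (w : List α) : α → ℝ :=
  fun i => (w.count i : ℝ)

theorem sum_parikhVector {α : Type*} [Fintype α] [DecidableEq α] (w : List α) :
    ∑ i, parikhVector w i = w.length := by
  have h : ∑ i, w.count i = w.length := by
    simpa using Multiset.sum_count_eq_card (s := Finset.univ) (m := (w : Multiset α))
      fun a _ => Finset.mem_univ a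
  simp only [parikhVector]
  exact_mod_cast h

theorem sum_parikhVector_sub_eq_zero {α : Type*} [Fintype α] [DecidableEq α] {v w : List α}
    (hlen : v.length = w.length) : ∑ i, (parikhVector v - parikhVector w) i = 0 := by
  simp only [Pi.sub_apply, Finset.sum_sub_distrib, sum_parikhVector, hlen, sub_self]

theorem norm_sub_le_two_mul_diam {E : Type*} [SeminormedAddCommGroup E] {F : Set E}
    (hF : Bornology.IsBounded F) {x y a b : E} (hx : x ∈ F) (hxa : x + a ∈ F) (hy : y ∈ F)
    (hyb : y + b ∈ F) : ‖a - b‖ ≤ 2 * Metric.diam F := by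
  have hab : a - b = (x + a - (y + b)) - (x - y) := by abel
  calc ‖a - b‖ ≤ ‖x + a - (y + b)‖ + ‖x - y‖ := hab ▸ norm_sub_le _ _
    _ ≤ Metric.diam F + Metric.diam F := by
        gcongr
        · exact dist_eq_norm (x + a) (y + b) ▸ Metric.dist_le_diam_of_mem hF hxa hyb
        · exact dist_eq_norm x y ▸ Metric.dist_le_diam_of_mem hF hx hy
    _ = 2 * Metric.diam F := by ring

theorem abs_parikhVector_sub_le {ι m : Type*} [Fintype ι] [DecidableEq ι] [Fintype m]
    {F : Set (m → ℝ)} (hF : Bornology.IsBounded F) {N : Matrix m ι ℝ} {c : ℝ} (hc0 : 0 ≤ c)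
    (hc : ∀ x : ι → ℝ, ∑ i, x i = 0 → ‖x‖ ≤ c * ‖N *ᵥ x‖) {v w : List ι}
    (hlen : v.length = w.length) {x y : m → ℝ} (hx : x ∈ F) (hxv : x + N *ᵥ parikhVector v ∈ F)
    (hy : y ∈ F) (hyw : y + N *ᵥ parikhVector w ∈ F) (i : ι) :
    |parikhVector v i - parikhVector w i| ≤ 2 * c * Metric.diam F := by
  have hN : ‖N *ᵥ (parikhVector v - parikhVector w)‖ ≤ 2 * Metric.diam F := by
    rw [mulVec_sub]
    exact norm_sub_le_two_mul_diam hF hx hxv hy hyw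
  calc |parikhVector v i - parikhVector w i| ≤ ‖parikhVector v - parikhVector w‖ :=
        norm_le_pi_norm (parikhVector v - parikhVector w) i
    _ ≤ c * ‖N *ᵥ (parikhVector v - parikhVector w)‖ := hc _ (sum_parikhVector_sub_eq_zero hlen)
    _ ≤ c * (2 * Metric.diam F) := by gcongr
    _ = 2 * c * Metric.diam F := by ring

/-- let `L` be the language of a subshift over `{1,…,d}` that is a natural
coding of a minimal translation on `𝕋^{d−1}` w.r.t. a partition of a bounded fundamental
domain `F`; i.e. (with `N` the matrix of translation vectors) for every `w ∈ L` there is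
`x ∈ F` with `x + N·l(w) ∈ F`. If `c > 0` satisfies `‖x‖ ≤ c‖Nx‖` on `1^⊥`, then `L` is
`C`-balanced with `C = 2c·diam F`. -/
theorem stmt_14 (d : ℕ) (L : Set (List (Fin d)))
    (F : Set (Fin (d - 1) → ℝ)) (hFbdd : Bornology.IsBounded F)
    (N : Matrix (Fin (d - 1)) (Fin d) ℝ) (c : ℝ) (hc0 : 0 < c)
    (hc : ∀ x : Fin d → ℝ, (∑ i, x i) = 0 → ‖x‖ ≤ c * ‖N.mulVec x‖)
    (hcode : ∀ w ∈ L, ∃ x ∈ F, x + N.mulVec (fun i => (w.count i : ℝ)) ∈ F) :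
    ∀ v ∈ L, ∀ w ∈ L, v.length = w.length → ∀ i : Fin d,
      |(v.count i : ℝ) - (w.count i : ℝ)| ≤ 2 * c * Metric.diam F := by
  intro v hv w hw hlen i
  obtain ⟨x, hx, hxv⟩ := hcode v hv
  obtain ⟨y, hy, hyw⟩ := hcode w hw
  exact abs_parikhVector_sub_le hFbdd hc0.le hc hlen hx hxv hy hyw i
end

section
/- Let t ∈ ℝ^{d−1} be totally irrational (i.e., 1, t₁, …, t_{d−1} are rationally independent, equivalently R_t is minimal on 𝕋^{d−1}). Let t₁,…,t_d ∈ ℝ^{d−1} satisfy t_i ≡ t (mod ℤ^{d−1}) for all i, and let u ∈ ℝ^d with Σu_i = 1, u_i > 0, and Σ_{i=1}^d u_i t_i = 0. Then u has rationally independent coordinates: there is no nonzero z ∈ ℤ^d with ⟨z, u⟩ = 0. -/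
/-!
Write `t_i = t + m_i` with `m_i ∈ ℤ^{d-1}`. Since `∑ u_i = 1` and `∑ u_i t_i = 0`, we get
`t = -∑ u_i m_i`, so `1` and every `t_k` are integer combinations of `u_1, …, u_d`. Total
irrationality makes these `d` numbers `ℚ`-linearly independent, so the `ℚ`-span of the `u_i`
has dimension `d`, which forces the `u_i` themselves to be `ℚ`-linearly independent.
-/

open Submodule

theorem LinearIndependent.of_card_eq_of_range_subset_span {K V ι κ : Type*} [DivisionRing K]
    [AddCommGroup V] [Module K V] [Fintype ι] [Fintype κ] {v : ι → V} {w : κ → V}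
    (hw : LinearIndependent K w) (hwv : Set.range w ⊆ span K (Set.range v))
    (hcard : Fintype.card κ = Fintype.card ι) : LinearIndependent K v := by
  rw [linearIndependent_iff_card_eq_finrank_span] at hw ⊢
  have := FiniteDimensional.span_of_finite K (Set.finite_range v)
  refine le_antisymm ?_ (finrank_range_le_card v)
  calc Fintype.card ι = Set.finrank K (Set.range w) := hcard ▸ hw
    _ ≤ Set.finrank K (Set.range v) := finrank_mono (span_le.mpr hwv)

theorem linearIndependent_rat_option_elim_one {ι : Type*} [Fintype ι] {t : ι → ℝ}
    (hirr : ∀ (z : ι → ℤ) (z0 : ℤ), (∑ k, (z k : ℝ) * t k) + z0 = 0 → z = 0 ∧ z0 = 0) :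
    LinearIndependent ℚ (fun o : Option ι => o.elim 1 t) := by
  refine (LinearIndependent.iff_fractionRing ℤ ℚ).mp (Fintype.linearIndependent_iff.mpr ?_)
  intro g hg
  rw [Fintype.sum_option] at hg
  obtain ⟨hsome, hnone⟩ := hirr (fun k => g (some k)) (g none)
    (by simpa [add_comm] using hg)
  rintro (_ | k)
  · exact hnone
  · exact congrFun hsome k

theorem intCast_sum_mul_mem_span_rat {ι : Type*} [Fintype ι] (u : ι → ℝ) (c : ι → ℤ) :
    ∑ i, (c i : ℝ) * u i ∈ span ℚ (Set.range u) :=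
  sum_mem fun i _ => by
    rw [← Rat.cast_intCast, ← smul_eq_mul, Rat.cast_smul_eq_qsmul]
    exact smul_mem _ _ (subset_span (Set.mem_range_self i))

theorem eq_neg_sum_smul_of_sum_smul_add_eq_zero {ι V : Type*} [Fintype ι] [AddCommGroup V]
    [Module ℝ V] {u : ι → ℝ} (hsum : ∑ i, u i = 1) (t : V) (m : ι → V)
    (h : ∑ i, u i • (t + m i) = 0) : t = -∑ i, u i • m i := by
  simp only [smul_add, Finset.sum_add_distrib, ← Finset.sum_smul, hsum, one_smul] at h
  exact eq_neg_of_add_eq_zero_left h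

theorem stmt_15_general (d : ℕ) (t : Fin (d - 1) → ℝ)
    (hirr : ∀ (z : Fin (d - 1) → ℤ) (z0 : ℤ),
      (∑ k, (z k : ℝ) * t k) + z0 = 0 → z = 0 ∧ z0 = 0)
    (ti : Fin d → Fin (d - 1) → ℝ)
    (hti : ∀ i, ∃ z : Fin (d - 1) → ℤ, ti i = fun k => t k + (z k : ℝ))
    (u : Fin d → ℝ) (hsum : ∑ i, u i = 1)
    (hut : ∑ i, u i • ti i = 0) :
    ∀ z : Fin d → ℤ, (∑ i, (z i : ℝ) * u i) = 0 → z = 0 := by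
  choose m hm using hti
  have hd : d ≠ 0 := by rintro rfl; simp at hsum
  have ht : t = -∑ i, u i • fun k => (m i k : ℝ) :=
    eq_neg_sum_smul_of_sum_smul_add_eq_zero hsum t _
      (by rwa [show ti = fun i => t + fun k => (m i k : ℝ) from funext hm] at hut)
  have hspan :
      Set.range (fun o : Option (Fin (d - 1)) => o.elim 1 t) ⊆ span ℚ (Set.range u) := by
    rintro _ ⟨_ | k, rfl⟩
    · change (1 : ℝ) ∈ _
      rw [← hsum]
      simpa using intCast_sum_mul_mem_span_rat u 1
    · have htk : t k = ∑ i, ((-m i k : ℤ) : ℝ) * u i := by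
        rw [ht]; simp [mul_comm]
      simpa [htk] using intCast_sum_mul_mem_span_rat u fun i => -m i k
  have hu : LinearIndependent ℚ u :=
    (linearIndependent_rat_option_elim_one hirr).of_card_eq_of_range_subset_span hspan
      (by simp only [Fintype.card_option, Fintype.card_fin]; omega)
  intro z hz
  funext i
  exact_mod_cast Fintype.linearIndependent_iff.mp hu (fun i => (z i : ℚ))
    (by simpa [← Rat.cast_smul_eq_qsmul ℝ] using hz) i

/-- let `t ∈ ℝ^{d−1}` be totally irrational (`1, t₁, …, t_{d−1}` rationally
independent), `t₁,…,t_d ≡ t (mod ℤ^{d−1})`, and `u ∈ ℝ^d` with `∑ u_i = 1`, `u_i > 0` and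
`∑ u_i t_i = 0`. Then `u` has rationally independent coordinates: no nonzero `z ∈ ℤ^d`
satisfies `⟨z, u⟩ = 0`. -/
theorem stmt_15 (d : ℕ) (t : Fin (d - 1) → ℝ)
    (hirr : ∀ (z : Fin (d - 1) → ℤ) (z0 : ℤ),
      (∑ k, (z k : ℝ) * t k) + z0 = 0 → z = 0 ∧ z0 = 0)
    (ti : Fin d → Fin (d - 1) → ℝ)
    (hti : ∀ i, ∃ z : Fin (d - 1) → ℤ, ti i = fun k => t k + (z k : ℝ))
    (u : Fin d → ℝ) (hsum : ∑ i, u i = 1) (hpos : ∀ i, 0 < u i)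
    (hut : ∑ i, u i • ti i = 0) :
    ∀ z : Fin d → ℤ, (∑ i, (z i : ℝ) * u i) = 0 → z = 0 :=
  stmt_15_general d t hirr ti hti u hsum hut
end

section
/- Let (𝔇, Σ, ν) be ergodic and let D̃ carry a factor structure via a map ψ : 𝔇 → D with ψ ∘ Σ^k = Σ ∘ ψ. If D' ⊆ D is Σ-invariant (mod ν∘ψ⁻¹-null sets) with ν(ψ⁻¹(D')) > 0, then ν(ψ⁻¹(D')) ≥ 1/k. Consequently, (D, Σ, ν∘ψ⁻¹) decomposes into at most k ergodic components. -/
/-!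
If `ψ ∘ T^[k] = S ∘ ψ` and `D'` is `S`-invariant, then `A = ψ⁻¹ D'` is `T^[k]`-invariant, so
`A ∪ T⁻¹ A ∪ ⋯ ∪ T^{-(k-1)} A` is `T`-invariant. By ergodicity it has full measure, and since `T`
preserves the measure, subadditivity gives `1 ≤ k ν(A)`. Hence `k + 1` disjoint invariant sets of
positive mass would have total mass `> 1`.
-/

open MeasureTheory Set
open scoped symmDiff

theorem Set.symmDiff_biUnion_range_succ_subset {α : Type*} (a : ℕ → Set α) (k : ℕ) :
    (⋃ i ∈ Finset.range k, a (i + 1)) ∆ (⋃ i ∈ Finset.range k, a i) ⊆ a k ∆ a 0 := by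
  rintro x (⟨hU, hV⟩ | ⟨hV, hU⟩) <;>
    simp only [mem_iUnion₂, Finset.mem_range, exists_prop, not_exists, not_and] at hU hV
  · obtain ⟨i, hi, hx⟩ := hU
    obtain rfl : i + 1 = k := by
      by_contra hne
      exact hV (i + 1) (by omega) hx
    exact Or.inl ⟨hx, hV 0 (by omega)⟩
  · obtain ⟨i, hi, hx⟩ := hV
    obtain rfl : i = 0 := by
      by_contra hne
      exact hU (i - 1) (by omega) (by rwa [Nat.sub_add_cancel (by omega)])
    refine Or.inr ⟨hx, fun hxk => hU (k - 1) (by omega) ?_⟩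
    rwa [Nat.sub_add_cancel (by omega)]

theorem Set.preimage_biUnion_iterate_symmDiff_subset {α : Type*} (f : α → α) (A : Set α)
    (k : ℕ) :
    (f ⁻¹' ⋃ i ∈ Finset.range k, f^[i] ⁻¹' A) ∆ (⋃ i ∈ Finset.range k, f^[i] ⁻¹' A) ⊆
      (f^[k] ⁻¹' A) ∆ A := by
  simpa [preimage_iUnion₂, ← preimage_comp, ← Function.iterate_succ] using
    symmDiff_biUnion_range_succ_subset (fun i => f^[i] ⁻¹' A) k

theorem Ergodic.measure_univ_le_mul_of_preimage_iterate_ae_eq {α : Type*} [MeasurableSpace α]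
    {T : α → α} {μ : Measure α} (hT : Ergodic T μ) {k : ℕ} (hk : 0 < k) {A : Set α}
    (hA : MeasurableSet A) (hinv : T^[k] ⁻¹' A =ᵐ[μ] A) (hpos : μ A ≠ 0) :
    μ univ ≤ k * μ A := by
  set B := ⋃ i ∈ Finset.range k, T^[i] ⁻¹' A
  have hB : MeasurableSet B :=
    Finset.measurableSet_biUnion _ fun i _ => hT.measurable.iterate i hA
  have hBinv : T ⁻¹' B =ᵐ[μ] B := measure_symmDiff_eq_zero_iff.mp <|
    measure_mono_null (preimage_biUnion_iterate_symmDiff_subset T A k)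
      (measure_symmDiff_eq_zero_iff.mpr hinv)
  have hAB : A ⊆ B := subset_biUnion_of_mem (u := fun i => T^[i] ⁻¹' A) (Finset.mem_range.2 hk)
  have hBuniv : B =ᵐ[μ] univ :=
    (hT.quasiErgodic.ae_empty_or_univ₀ hB.nullMeasurableSet hBinv).resolve_left
      fun h => hpos (measure_mono_null hAB (ae_eq_empty.mp h))
  calc μ univ = μ B := (measure_congr hBuniv).symm
    _ ≤ ∑ i ∈ Finset.range k, μ (T^[i] ⁻¹' A) := measure_biUnion_finset_le _ _
    _ = k * μ A := by
      simp [(hT.toMeasurePreserving.iterate _).measure_preimage hA.nullMeasurableSet]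

theorem Ergodic.one_le_mul_map_apply_of_comp_iterate_eq {X Y : Type*} [MeasurableSpace X]
    [MeasurableSpace Y] {ν : Measure X} [IsProbabilityMeasure ν] {T : X → X} (hT : Ergodic T ν)
    {k : ℕ} (hk : 0 < k) {S : Y → Y} {ψ : X → Y} (hψ : Measurable ψ)
    (hcomm : ψ ∘ T^[k] = S ∘ ψ) {D : Set Y} (hD : MeasurableSet D)
    (hinv : ν.map ψ ((S ⁻¹' D) ∆ D) = 0) (hpos : ν.map ψ D ≠ 0) :
    1 ≤ k * ν.map ψ D := by
  rw [Measure.map_apply hψ hD] at hpos ⊢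
  have hAinv : T^[k] ⁻¹' (ψ ⁻¹' D) =ᵐ[ν] ψ ⁻¹' D := by
    rw [← measure_symmDiff_eq_zero_iff, ← preimage_comp, hcomm, preimage_comp,
      ← preimage_symmDiff]
    exact le_zero_iff.mp (hinv ▸ Measure.le_map_apply hψ.aemeasurable _)
  simpa using hT.measure_univ_le_mul_of_preimage_iterate_ae_eq hk (hψ hD) hAinv hpos

theorem MeasureTheory.exists_measure_eq_zero_of_one_le_mul {α ι : Type*} [MeasurableSpace α]
    [Fintype ι] {μ : Measure α} [IsProbabilityMeasure μ] {c : ENNReal}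
    (hc : c < Fintype.card ι) {E : ι → Set α} (hE : ∀ i, MeasurableSet (E i))
    (hdisj : Pairwise (Function.onFun Disjoint E)) (hmass : ∀ i, μ (E i) ≠ 0 → 1 ≤ c * μ (E i)) :
    ∃ i, μ (E i) = 0 := by
  by_contra! hne
  refine hc.not_ge ?_
  calc (Fintype.card ι : ENNReal) = ∑ _i : ι, 1 := by simp
    _ ≤ ∑ i, c * μ (E i) := Finset.sum_le_sum fun i _ => hmass i (hne i)
    _ = c * μ (⋃ i ∈ Finset.univ, E i) := by
      rw [← Finset.mul_sum, measure_biUnion_finset (hdisj.set_pairwise _) fun i _ => hE i]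
    _ ≤ c := mul_le_of_le_one_right' prob_le_one

theorem stmt_17_general {X Y : Type*} [MeasurableSpace X] [MeasurableSpace Y]
    (ν : Measure X) [IsProbabilityMeasure ν]
    (T : X → X) (hT : Ergodic T ν)
    (k : ℕ) (hk : 1 ≤ k)
    (S : Y → Y)
    (ψ : X → Y) (hψ : Measurable ψ)
    (hcomm : ψ ∘ T^[k] = S ∘ ψ) :
    (∀ D' : Set Y, MeasurableSet D' →
      (ν.map ψ) (symmDiff (S ⁻¹' D') D') = 0 →
      0 < (ν.map ψ) D' →
      (1 : ENNReal) / (k : ENNReal) ≤ (ν.map ψ) D') ∧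
    ∀ E : Fin (k + 1) → Set Y, (∀ i, MeasurableSet (E i)) →
      Pairwise (Function.onFun Disjoint E) →
      (∀ i, (ν.map ψ) (symmDiff (S ⁻¹' E i) (E i)) = 0) →
      ∃ i, (ν.map ψ) (E i) = 0 := by
  have hmass : ∀ D' : Set Y, MeasurableSet D' → ν.map ψ ((S ⁻¹' D') ∆ D') = 0 →
      ν.map ψ D' ≠ 0 → 1 ≤ k * ν.map ψ D' := fun _ hD' hinv hpos =>
    hT.one_le_mul_map_apply_of_comp_iterate_eq hk hψ hcomm hD' hinv hpos
  have : IsProbabilityMeasure (ν.map ψ) := Measure.isProbabilityMeasure_map hψ.aemeasurable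
  have hk_lt : (k : ENNReal) < Fintype.card (Fin (k + 1)) := by
    simpa using ENNReal.lt_add_right (ENNReal.natCast_ne_top k) one_ne_zero
  exact ⟨fun D' hD' hinv hpos => ENNReal.div_le_of_le_mul' (hmass D' hD' hinv hpos.ne'),
    fun E hE hdisj hinv => exists_measure_eq_zero_of_one_le_mul hk_lt hE hdisj
      fun i => hmass (E i) (hE i) (hinv i)⟩

/-- let `(𝔇, T, ν)` be ergodic (probability) and `ψ : 𝔇 → D` intertwine
`T^k` with `S` (`ψ ∘ T^[k] = S ∘ ψ`). If `D' ⊆ D` is `S`-invariant mod `ν∘ψ⁻¹`-null sets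
and has positive measure, then `(ν∘ψ⁻¹)(D') ≥ 1/k`. Consequently `(D, S, ν∘ψ⁻¹)` has at
most `k` ergodic components: there are no `k+1` pairwise disjoint invariant sets of
positive measure. -/
theorem stmt_17 {X Y : Type*} [MeasurableSpace X] [MeasurableSpace Y]
    (ν : Measure X) [IsProbabilityMeasure ν]
    (T : X → X) (hT : Ergodic T ν)
    (k : ℕ) (hk : 1 ≤ k)
    (S : Y → Y) (hS : Measurable S)
    (ψ : X → Y) (hψ : Measurable ψ)
    (hcomm : ψ ∘ T^[k] = S ∘ ψ) :
    (∀ D' : Set Y, MeasurableSet D' →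
      (ν.map ψ) (symmDiff (S ⁻¹' D') D') = 0 →
      0 < (ν.map ψ) D' →
      (1 : ENNReal) / (k : ENNReal) ≤ (ν.map ψ) D') ∧
    ∀ E : Fin (k + 1) → Set Y, (∀ i, MeasurableSet (E i)) →
      Pairwise (Function.onFun Disjoint E) →
      (∀ i, (ν.map ψ) (symmDiff (S ⁻¹' E i) (E i)) = 0) →
      ∃ i, (ν.map ψ) (E i) = 0 :=
  stmt_17_general ν T hT k hk S ψ hψ hcomm
end

section
/- The composition τ = β₁₂ ∘ β₂₃ ∘ β₃₄ ∘ β₄₁ of Brun substitutions over {1,2,3,4} (where β_{ij} sends j ↦ ij and fixes all other letters) satisfies τ(1) = 12341, τ(2) = 12, τ(3) = 123, τ(4) = 1234, and the characteristic polynomial of its incidence matrix is the minimal polynomial of a Pisot number. -/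
/-!
The incidence matrix of `τ` has characteristic polynomial `X⁴ - 5X³ + 6X² - 4X + 1`, which is
irreducible because its reduction `X⁴ + X³ + 1` modulo 2 has neither roots nor quadratic factors.
By the intermediate value theorem it has real roots `λ ∈ [7/2, 4]` and `t ∈ [2/5, 1/2]`. By Vieta,
the remaining two roots `z, w` satisfy `z + w = 5 - λ - t` and `z w = 1 / (λ t)`; since
`(5 - λ - t)² < 4 / (λ t)` they are complex conjugate, so `|z|² = 1 / (λ t) < 1`.
-/

/-- The Brun substitution `β_{ij} : j ↦ ij, k ↦ k (k ≠ j)` over `{1,2,3,4}` (letters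
shifted to `0,1,2,3`). -/
def brun (i j : Fin 4) : Fin 4 → List (Fin 4) := fun k => if k = j then [i, j] else [k]

/-- The composition `τ = β₁₂ ∘ β₂₃ ∘ β₃₄ ∘ β₄₁` (apply `β₄₁` first). -/
def brunτ : Fin 4 → List (Fin 4) :=
  fun j => (((brun 3 0 j).flatMap (brun 2 3)).flatMap (brun 1 2)).flatMap (brun 0 1)

open Polynomial

namespace Polynomial

lemma Monic.eq_X_sq_add_C_mul_X_add_C {R : Type*} [CommRing R] {q : R[X]} (hq : q.Monic)
    (hd : q.natDegree = 2) : q = X ^ 2 + C (q.coeff 1) * X + C (q.coeff 0) := by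
  conv_lhs => rw [hq.as_sum, hd]
  simp only [Finset.sum_range_succ, Finset.range_one, Finset.sum_singleton, pow_zero, mul_one,
    pow_one]
  ring

lemma X_sq_add_C_mul_X_add_C_mul {R : Type*} [CommRing R] (a b c d : R) :
    (X ^ 2 + C a * X + C b) * (X ^ 2 + C c * X + C d) =
      X ^ 4 + C (a + c) * X ^ 3 + C (b + d + a * c) * X ^ 2 + C (a * d + b * c) * X + C (b * d) := by
  simp only [map_add, map_mul]
  ring

lemma Monic.irreducible_of_natDegree_eq_four {K : Type*} [Field K] {p : K[X]} (hm : p.Monic)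
    (hd : p.natDegree = 4) (hroot : ∀ x, ¬ p.IsRoot x)
    (hquad : ∀ a b c d : K, a + c = p.coeff 3 → b + d + a * c = p.coeff 2 →
      a * d + b * c = p.coeff 1 → b * d = p.coeff 0 → False) :
    Irreducible p := by
  have hp1 : p ≠ 1 := fun h => by simp [h] at hd
  rw [hm.irreducible_iff_lt_natDegree_lt hp1, hd]
  rintro q hq hqd ⟨r, rfl⟩
  obtain hq1 | hq2 : q.natDegree = 1 ∨ q.natDegree = 2 := by
    simp only [Nat.reduceDiv, Finset.mem_Ioc] at hqd
    omega
  · refine hroot (-q.coeff 0) (root_mul_right_of_isRoot _ ?_)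
    rw [hq.eq_X_add_C hq1]
    simp
  · have hr : r.Monic := hq.of_mul_monic_left hm
    have hrd : r.natDegree = 2 := by
      have := hq.natDegree_mul hr
      omega
    rw [hq.eq_X_sq_add_C_mul_X_add_C hq2, hr.eq_X_sq_add_C_mul_X_add_C hrd,
      X_sq_add_C_mul_X_add_C_mul] at hquad
    refine hquad (q.coeff 1) (q.coeff 0) (r.coeff 1) (r.coeff 0) ?_ ?_ ?_ ?_ <;>
      simp only [coeff_add, coeff_C_mul, coeff_X_pow, coeff_X, coeff_C] <;> norm_num

lemma Monic.exists_root_add_eq_and_mul_eq {K : Type*} [Field K] [IsAlgClosed K]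
    {p : K[X]} (hm : p.Monic) (hd : p.natDegree = 4) {a b c : K} (hab : a ≠ b) (hac : a ≠ c)
    (hbc : b ≠ c) (ha : p.IsRoot a) (hb : p.IsRoot b) (hc : p.IsRoot c) :
    ∃ d, a + b + c + d = -p.coeff 3 ∧ a * b * c * d = p.coeff 0 := by
  have hle : ({a, b, c} : Multiset K) ≤ p.roots := by
    rw [Multiset.le_iff_subset (by simp [hab, hac, hbc])]
    simpa [Multiset.subset_iff, mem_roots hm.ne_zero] using ⟨ha, hb, hc⟩
  obtain ⟨u, hu⟩ := Multiset.le_iff_exists_add.1 hle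
  have hcard : u.card = 1 := by
    have := congrArg Multiset.card hu
    rw [IsAlgClosed.card_roots_eq_natDegree, hd] at this
    simp only [Multiset.insert_eq_cons, Multiset.cons_add, Multiset.singleton_add,
      Multiset.card_cons] at this
    omega
  obtain ⟨d, rfl⟩ := Multiset.card_eq_one.1 hcard
  refine ⟨d, ?_, ?_⟩
  · have h := (IsAlgClosed.splits p).nextCoeff_eq_neg_sum_roots_of_monic hm
    rw [nextCoeff_of_natDegree_pos (by omega), hd, hu] at h
    simp [h, add_assoc]
  · have h := (IsAlgClosed.splits p).coeff_zero_eq_prod_roots_of_monic hm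
    rw [hd, hu] at h
    norm_num [h, mul_assoc]

lemma exists_isRoot_mem_uIcc (p : ℝ[X]) {a b : ℝ} (h : 0 ∈ Set.uIcc (p.eval a) (p.eval b)) :
    ∃ x ∈ Set.uIcc a b, p.IsRoot x :=
  intermediate_value_uIcc p.continuous.continuousOn h

end Polynomial

lemma Complex.normSq_eq_of_add_eq_of_mul_eq {z w : ℂ} {s v : ℝ} (hs : z + w = s)
    (hv : z * w = v) (hdisc : s ^ 2 < 4 * v) : Complex.normSq z = v := by
  obtain rfl : w = s - z := by rw [← hs]; ring
  have hre : z.re * (s - z.re) + z.im * z.im = v := by simpa using congrArg Complex.re hv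
  have him : z.im * (s - 2 * z.re) = 0 := by
    have := congrArg Complex.im hv
    simp only [Complex.mul_im, Complex.sub_re, Complex.sub_im, Complex.ofReal_re,
      Complex.ofReal_im] at this
    linear_combination this
  have hz : z.im ≠ 0 := by
    rintro h
    rw [h] at hre
    nlinarith [sq_nonneg (2 * z.re - s)]
  obtain rfl : s = 2 * z.re := by linarith [(mul_eq_zero.1 him).resolve_left hz]
  rw [Complex.normSq_apply]
  linear_combination hre

noncomputable def tauPoly (R : Type*) [CommRing R] : R[X] :=
  X ^ 4 - 5 * X ^ 3 + 6 * X ^ 2 - 4 * X + 1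

section tauPoly

variable {R : Type*} [CommRing R]

@[simp]
lemma eval_tauPoly (x : R) :
    (tauPoly R).eval x = x ^ 4 - 5 * x ^ 3 + 6 * x ^ 2 - 4 * x + 1 := by
  simp [tauPoly]

@[simp]
lemma map_tauPoly {S : Type*} [CommRing S] (f : R →+* S) : (tauPoly R).map f = tauPoly S := by
  simp [tauPoly]

lemma aeval_tauPoly {A : Type*} [CommRing A] [Algebra R A] (x : A) :
    aeval x (tauPoly R) = (tauPoly A).eval x := by
  rw [aeval_def, eval₂_eq_eval_map, map_tauPoly]

lemma natDegree_tauPoly [Nontrivial R] : (tauPoly R).natDegree = 4 := by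
  unfold tauPoly
  compute_degree!

lemma monic_tauPoly [Nontrivial R] : (tauPoly R).Monic := by
  unfold tauPoly
  monicity!

lemma coeff_three_tauPoly : (tauPoly R).coeff 3 = -5 := by
  simp [tauPoly, coeff_X, coeff_one]

lemma coeff_zero_tauPoly : (tauPoly R).coeff 0 = 1 := by
  simp [tauPoly, coeff_X, coeff_one]

end tauPoly

lemma irreducible_tauPoly_zmod_two : Irreducible (tauPoly (ZMod 2)) := by
  refine monic_tauPoly.irreducible_of_natDegree_eq_four natDegree_tauPoly ?_ ?_
  · simp only [IsRoot, eval_tauPoly]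
    decide
  · simp only [tauPoly, coeff_add, coeff_sub, coeff_X_pow, coeff_X, coeff_one, coeff_ofNat_mul]
    decide

lemma irreducible_tauPoly_rat : Irreducible (tauPoly ℚ) := by
  have hℤ : Irreducible (tauPoly ℤ) := monic_tauPoly.irreducible_of_irreducible_map
    (Int.castRingHom (ZMod 2)) _ (by rw [map_tauPoly]; exact irreducible_tauPoly_zmod_two)
  simpa using (IsPrimitive.Int.irreducible_iff_irreducible_map_cast
    monic_tauPoly.isPrimitive).mp hℤ

lemma brunτ_incidence : (Matrix.of fun i j : Fin 4 => ((brunτ j).count i : ℚ)) =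
    !![2, 1, 1, 1; 1, 1, 1, 1; 1, 0, 1, 1; 1, 0, 0, 1] := by
  ext i j
  fin_cases i <;> fin_cases j <;> rfl

lemma charpoly_brunτ_incidence :
    (Matrix.of fun i j : Fin 4 => ((brunτ j).count i : ℚ)).charpoly = tauPoly ℚ := by
  rw [brunτ_incidence, Matrix.charpoly, Matrix.det_succ_row_zero]
  simp [Fin.sum_univ_succ, Matrix.det_succ_row_zero, Matrix.charmatrix_apply, Fin.succAbove,
    tauPoly, map_ofNat]
  ring

lemma exists_isRoot_tauPoly_mem_Icc :
    (∃ lam ∈ Set.Icc (7 / 2 : ℝ) 4, (tauPoly ℝ).IsRoot lam) ∧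
      ∃ t ∈ Set.Icc (2 / 5 : ℝ) (1 / 2), (tauPoly ℝ).IsRoot t := by
  constructor
  · obtain ⟨x, hx, hr⟩ := exists_isRoot_mem_uIcc (tauPoly ℝ) (a := 7 / 2) (b := 4)
      (by norm_num [Set.mem_uIcc])
    exact ⟨x, by rwa [Set.uIcc_of_le (by norm_num)] at hx, hr⟩
  · obtain ⟨x, hx, hr⟩ := exists_isRoot_mem_uIcc (tauPoly ℝ) (a := 2 / 5) (b := 1 / 2)
      (by norm_num [Set.mem_uIcc])
    exact ⟨x, by rwa [Set.uIcc_of_le (by norm_num)] at hx, hr⟩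

lemma isRoot_tauPoly_ofReal {x : ℝ} (hx : (tauPoly ℝ).IsRoot x) : (tauPoly ℂ).IsRoot x := by
  simpa using hx.map (f := algebraMap ℝ ℂ)

lemma norm_lt_one_of_isRoot_tauPoly {lam t : ℝ} (hlam : lam ∈ Set.Icc (7 / 2 : ℝ) 4)
    (ht : t ∈ Set.Icc (2 / 5 : ℝ) (1 / 2)) (hlr : (tauPoly ℝ).IsRoot lam)
    (htr : (tauPoly ℝ).IsRoot t) {z : ℂ} (hz : (tauPoly ℂ).IsRoot z) (hzl : z ≠ lam) :
    ‖z‖ < 1 := by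
  obtain ⟨hl₁, hl₂⟩ := hlam
  obtain ⟨ht₁, ht₂⟩ := ht
  by_cases hzt : z = t
  · rw [hzt, Complex.norm_real, Real.norm_of_nonneg (by linarith)]
    linarith
  have hlt : (lam : ℂ) ≠ t := by exact_mod_cast (by linarith : lam ≠ t)
  obtain ⟨w, hsum, hprod⟩ := monic_tauPoly.exists_root_add_eq_and_mul_eq natDegree_tauPoly
    hlt (Ne.symm hzl) (Ne.symm hzt) (isRoot_tauPoly_ofReal hlr) (isRoot_tauPoly_ofReal htr) hz
  rw [coeff_three_tauPoly] at hsum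
  rw [coeff_zero_tauPoly] at hprod
  have hπ : 0 < lam * t := by positivity
  have hzw : z * w = ((lam * t)⁻¹ : ℝ) := by
    push_cast
    exact eq_inv_of_mul_eq_one_right (by linear_combination hprod)
  have hdisc : (5 - lam - t) ^ 2 < 4 * (lam * t)⁻¹ := by
    rw [← div_eq_mul_inv, lt_div_iff₀ hπ]
    nlinarith [mul_le_mul hl₂ ht₂ (by linarith) (by norm_num : (0 : ℝ) ≤ 4)]
  have hnorm := Complex.normSq_eq_of_add_eq_of_mul_eq (s := 5 - lam - t)
    (by push_cast; linear_combination hsum) hzw hdisc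
  rw [← sq_lt_one_iff₀ (norm_nonneg z), ← Complex.normSq_eq_norm_sq, hnorm]
  exact inv_lt_one_of_one_lt₀ (by nlinarith)

/-- `τ = β₁₂ ∘ β₂₃ ∘ β₃₄ ∘ β₄₁` satisfies `τ(1) = 12341`, `τ(2) = 12`,
`τ(3) = 123`, `τ(4) = 1234`, and the characteristic polynomial of its incidence matrix is
the minimal polynomial of a Pisot number (a real algebraic integer `λ > 1` all of whose
other conjugates lie in the open unit disk). -/
theorem stmt_19 :
    brunτ 0 = [0, 1, 2, 3, 0] ∧ brunτ 1 = [0, 1] ∧ brunτ 2 = [0, 1, 2] ∧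
    brunτ 3 = [0, 1, 2, 3] ∧
    ∃ lam : ℝ, 1 < lam ∧ IsIntegral ℤ lam ∧
      minpoly ℚ lam = (Matrix.of fun i j : Fin 4 => ((brunτ j).count i : ℚ)).charpoly ∧
      ∀ z : ℂ, Polynomial.aeval z
          ((Matrix.of fun i j : Fin 4 => ((brunτ j).count i : ℚ)).charpoly) = 0 →
        z = (lam : ℂ) ∨ ‖z‖ < 1 := by
  refine ⟨by decide, by decide, by decide, by decide, ?_⟩
  obtain ⟨⟨lam, hlam, hlr⟩, ⟨t, ht, htr⟩⟩ := exists_isRoot_tauPoly_mem_Icc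
  rw [charpoly_brunτ_incidence]
  refine ⟨lam, by linarith [hlam.1], ⟨tauPoly ℤ, monic_tauPoly, ?_⟩, ?_, fun z hz => ?_⟩
  · rwa [eval₂_eq_eval_map, map_tauPoly]
  · exact (minpoly.eq_of_irreducible_of_monic irreducible_tauPoly_rat
      (by rwa [aeval_tauPoly]) monic_tauPoly).symm
  · rw [aeval_tauPoly] at hz
    exact or_iff_not_imp_left.2 (norm_lt_one_of_isRoot_tauPoly hlam ht hlr htr hz)
end
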